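/- There is an absolute constant δ* ∈ (0,1) such that for every 0 < δ₀ ≤ δ* the following holds. Let γ ∈ 𝔊₄(δ₀), let ξ ∈ ℝ⁴∖{0} be admissible for γ with parameter δ₀, let θ₂(ξ) ∈ [−1,1] be the unique solution of ⟨γ^{(3)}(s), ξ⟩ = 0 on [−1,1], and set u₂(ξ) := ⟨γ''(θ₂(ξ)), ξ⟩. Then: (i) if u₂(ξ) > 0, the equation ⟨γ''(s), ξ⟩ = 0 has no solution in [−1,1]; (ii) if u₂(ξ) = 0, its only solution in [−1,1] is s = θ₂(ξ); (iii) if u₂(ξ) < 0, it has exactly two solutions in [−1,1], and both solutions have absolute value at most C δ₀^{1/2} for an absolute constant C. -/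

import Mathlib

open MeasureTheory Set
open scoped FourierTransform InnerProductSpace ENNReal

noncomputable section

/-- Euclidean space ℝⁿ. -/
abbrev Euc (n : ℕ) := EuclideanSpace ℝ (Fin n)

/-- The averaging operator `A_γ f (x) = ∫ f(x - γ(s)) χ(s) ds`. -/
def avgOp {n : ℕ} (γ : ℝ → Euc n) (χ : ℝ → ℝ) (f : Euc n → ℂ) : Euc n → ℂ :=
  fun x => ∫ s : ℝ, f (x - γ s) * (χ s : ℂ)

/-- The `L^p` Sobolev norm `‖𝓕⁻¹[(1+|ξ|²)^{α/2} 𝓕 g]‖_{L^p}` of order `α`. -/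
def sobolevNorm {n : ℕ} (p : ℝ≥0∞) (α : ℝ) (g : Euc n → ℂ) : ℝ≥0∞ :=
  eLpNorm (𝓕⁻ (fun ξ : Euc n => (((1 + ‖ξ‖ ^ 2) ^ (α / 2) : ℝ) : ℂ) * 𝓕 g ξ)) p volume

/-- Non-degeneracy: `|det(γ'(s), …, γ⁽ⁿ⁾(s))| ≥ c₀ > 0` on `I`. -/
def NonDeg {n : ℕ} (γ : ℝ → Euc n) (I : Set ℝ) : Prop :=
  ∃ c₀ > (0 : ℝ), ∀ s ∈ I,
    c₀ ≤ |(Matrix.of fun i j : Fin n => iteratedDeriv ((j : ℕ) + 1) γ s i).det|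

/-- The moment curve `γ∘(s) = (s, s²/2!, …, sⁿ/n!)`. -/
def momentCurve (n : ℕ) (s : ℝ) : Euc n :=
  WithLp.toLp 2 (fun i : Fin n => s ^ ((i : ℕ) + 1) / (Nat.factorial ((i : ℕ) + 1) : ℝ))

/-- The class `𝔊_n(δ)` of model curves: smooth `γ : [−1,1] → ℝⁿ` with `γ(0) = 0`,
`γ⁽ʲ⁾(0) = e_j` for `1 ≤ j ≤ n`, and `‖γ − γ∘‖_{C^{n+1}([−1,1])} ≤ δ`. -/
def InG (n : ℕ) (δ : ℝ) (γ : ℝ → Euc n) : Prop :=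
  ContDiff ℝ (⊤ : ℕ∞) γ ∧ γ 0 = 0 ∧
  (∀ i : Fin n, iteratedDeriv ((i : ℕ) + 1) γ 0 = EuclideanSpace.single i 1) ∧
  ∀ j : ℕ, 1 ≤ j → j ≤ n + 1 → ∀ s ∈ Set.Icc (-1 : ℝ) 1,
    ‖iteratedDeriv j γ s - iteratedDeriv j (momentCurve n) s‖ ≤ δ

/-- `ξ` is admissible for `γ` with parameter `δ₀`: with `I₀ = [−δ₀, δ₀]`,
`⟨γ⁽⁴⁾(s), ξ⟩ ≥ (9/10)|ξ|` on `I₀`, `⟨γ⁽⁴⁾(s), ξ⟩ ≥ (1/2)|ξ|` on `[−1,1]`, and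
`|⟨γ⁽ʲ⁾(s), ξ⟩| ≤ 8δ₀|ξ|` for `j = 1, 2, 3` on `I₀`. -/
def Admissible (δ₀ : ℝ) (γ : ℝ → Euc 4) (ξ : Euc 4) : Prop :=
  (∀ s ∈ Set.Icc (-δ₀) δ₀, (9 / 10) * ‖ξ‖ ≤ ⟪iteratedDeriv 4 γ s, ξ⟫_ℝ) ∧
  (∀ s ∈ Set.Icc (-1 : ℝ) 1, (1 / 2) * ‖ξ‖ ≤ ⟪iteratedDeriv 4 γ s, ξ⟫_ℝ) ∧
  (∀ j : ℕ, 1 ≤ j → j ≤ 3 → ∀ s ∈ Set.Icc (-δ₀) δ₀,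
    |⟪iteratedDeriv j γ s, ξ⟫_ℝ| ≤ 8 * δ₀ * ‖ξ‖)

/-!
Write `g = ⟪γ'', ξ⟫`. Admissibility gives `g'' = ⟪γ⁽⁴⁾, ξ⟫ ≥ ‖ξ‖/2` on `[-1, 1]`, so `g` is
strongly convex with its minimum at the critical point `θ`: `g s ≥ g θ + ‖ξ‖ (s - θ)² / 4`.
Near `0`, `g` and `g'` are `O(δ₀ ‖ξ‖)`; since `g'` grows at rate `‖ξ‖/2`, this pins `|θ| ≤ 17 δ₀`,
and the tangent line of `g` at `0` gives `g θ ≥ -9 δ₀ ‖ξ‖`. Hence every zero of `g` satisfies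
`(s - θ)² ≤ 36 δ₀`, while `g(±1) > 0`; in the case `g θ < 0` the intermediate value theorem
gives one zero on each side of `θ`, and strict monotonicity there makes them the only ones.
-/

section SecondDerivative

variable {f f' f'' : ℝ → ℝ} {a b m x θ : ℝ}

lemma mul_sub_le_sub_of_le_hasDerivAt (hf : ∀ s, HasDerivAt f (f' s) s) (hab : a ≤ b)
    {c : ℝ} (hc : ∀ s ∈ Icc a b, c ≤ f' s) : c * (b - a) ≤ f b - f a :=
  (convex_Icc a b).mul_sub_le_image_sub_of_le_deriv
    (fun s _ => (hf s).continuousAt.continuousWithinAt)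
    (fun s _ => (hf s).differentiableAt.differentiableWithinAt)
    (fun s hs => (hf s).deriv ▸ hc s (interior_subset hs)) a ⟨le_rfl, hab⟩ b ⟨hab, le_rfl⟩ hab

lemma sub_le_mul_sub_of_hasDerivAt_le (hf : ∀ s, HasDerivAt f (f' s) s) (hab : a ≤ b)
    {c : ℝ} (hc : ∀ s ∈ Icc a b, f' s ≤ c) : f b - f a ≤ c * (b - a) :=
  (convex_Icc a b).image_sub_le_mul_sub_of_deriv_le
    (fun s _ => (hf s).continuousAt.continuousWithinAt)
    (fun s _ => (hf s).differentiableAt.differentiableWithinAt)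
    (fun s hs => (hf s).deriv ▸ hc s (interior_subset hs)) a ⟨le_rfl, hab⟩ b ⟨hab, le_rfl⟩ hab

lemma mul_abs_sub_le_abs_sub_of_le_hasDerivAt (hf : ∀ s, HasDerivAt f (f' s) s)
    (hm : ∀ s ∈ Icc a b, m ≤ f' s) {y : ℝ} (hx : x ∈ Icc a b) (hy : y ∈ Icc a b) :
    m * |y - x| ≤ |f y - f x| := by
  rcases le_total x y with hxy | hyx
  · have := mul_sub_le_sub_of_le_hasDerivAt hf hxy
      fun s hs => hm s ⟨hx.1.trans hs.1, hs.2.trans hy.2⟩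
    rw [abs_of_nonneg (sub_nonneg.2 hxy)]
    exact this.trans (le_abs_self _)
  · have := mul_sub_le_sub_of_le_hasDerivAt hf hyx
      fun s hs => hm s ⟨hy.1.trans hs.1, hs.2.trans hx.2⟩
    rw [abs_sub_comm, abs_of_nonneg (sub_nonneg.2 hyx), abs_sub_comm]
    exact this.trans (le_abs_self _)

lemma tangent_add_half_mul_sq_le (hf : ∀ s, HasDerivAt f (f' s) s)
    (hf' : ∀ s, HasDerivAt f' (f'' s) s) (hm : ∀ s ∈ Icc a b, m ≤ f'' s)
    (hx : x ∈ Icc a b) {s : ℝ} (hs : s ∈ Icc a b) :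
    f x + f' x * (s - x) + m / 2 * (s - x) ^ 2 ≤ f s := by
  set h : ℝ → ℝ := fun t => f t - f' x * (t - x) - m / 2 * (t - x) ^ 2
  have hh : ∀ t, HasDerivAt h (f' t - f' x - m * (t - x)) t := fun t => by
    have : HasDerivAt h (f' t - f' x * 1 - m / 2 * ((2 : ℕ) * (t - x) ^ (2 - 1) * 1)) t := by
      apply_rules [HasDerivAt.sub, HasDerivAt.const_mul, HasDerivAt.fun_pow, HasDerivAt.sub_const,
        hasDerivAt_id']
    exact this.congr_deriv (by push_cast; ring)
  suffices h x ≤ h s by simp only [h, sub_self, mul_zero, sub_zero] at this; linarith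
  rcases le_total x s with hxs | hsx
  · have hh' : ∀ t ∈ Icc x s, 0 ≤ f' t - f' x - m * (t - x) := fun t ht => by
      linarith [mul_sub_le_sub_of_le_hasDerivAt hf' ht.1
        fun u hu => hm u ⟨hx.1.trans hu.1, hu.2.trans (ht.2.trans hs.2)⟩]
    linarith [mul_sub_le_sub_of_le_hasDerivAt hh hxs hh']
  · have hh' : ∀ t ∈ Icc s x, f' t - f' x - m * (t - x) ≤ 0 := fun t ht => by
      linarith [mul_sub_le_sub_of_le_hasDerivAt hf' ht.2
        fun u hu => hm u ⟨hs.1.trans (ht.1.trans hu.1), hu.2.trans hx.2⟩]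
    linarith [sub_le_mul_sub_of_hasDerivAt_le hh hsx hh']

variable (hf : ∀ s, HasDerivAt f (f' s) s) (hf' : ∀ s, HasDerivAt f' (f'' s) s)
  (hm : 0 < m) (hcrit : f' θ = 0)
include hf hf' hm hcrit

lemma strictMonoOn_Icc_of_critical (hconv : ∀ s ∈ Icc θ b, m ≤ f'' s) :
    StrictMonoOn f (Icc θ b) := by
  refine strictMonoOn_of_deriv_pos (convex_Icc θ b)
    (fun s _ => (hf s).continuousAt.continuousWithinAt) fun s hs => ?_
  rw [interior_Icc] at hs
  have := mul_sub_le_sub_of_le_hasDerivAt hf' hs.1.le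
    fun u hu => hconv u ⟨hu.1, hu.2.trans hs.2.le⟩
  rw [(hf s).deriv]
  nlinarith [hs.1]

lemma strictAntiOn_Icc_of_critical (hconv : ∀ s ∈ Icc a θ, m ≤ f'' s) :
    StrictAntiOn f (Icc a θ) := by
  refine strictAntiOn_of_deriv_neg (convex_Icc a θ)
    (fun s _ => (hf s).continuousAt.continuousWithinAt) fun s hs => ?_
  rw [interior_Icc] at hs
  have := mul_sub_le_sub_of_le_hasDerivAt hf' hs.2.le
    fun u hu => hconv u ⟨hs.1.le.trans hu.1, hu.2⟩
  rw [(hf s).deriv]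
  nlinarith [hs.2]

lemma exists_two_zeros_of_critical (hconv : ∀ s ∈ Icc a b, m ≤ f'' s) (hθ : θ ∈ Icc a b)
    (hneg : f θ < 0) (ha : 0 < f a) (hb : 0 < f b) :
    ∃ s₁ s₂, s₁ ∈ Icc a b ∧ s₂ ∈ Icc a b ∧ s₁ ≠ s₂ ∧ f s₁ = 0 ∧ f s₂ = 0 ∧
      ∀ s ∈ Icc a b, f s = 0 → s = s₁ ∨ s = s₂ := by
  have hcont : ContinuousOn f (Icc a b) := fun s _ => (hf s).continuousAt.continuousWithinAt
  obtain ⟨s₁, hs₁, hfs₁⟩ := intermediate_value_Icc' hθ.1 (hcont.mono (Icc_subset_Icc_right hθ.2))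
    ⟨hneg.le, ha.le⟩
  obtain ⟨s₂, hs₂, hfs₂⟩ := intermediate_value_Icc hθ.2 (hcont.mono (Icc_subset_Icc_left hθ.1))
    ⟨hneg.le, hb.le⟩
  have hanti := strictAntiOn_Icc_of_critical hf hf' hm hcrit
    fun s hs => hconv s ⟨hs.1, hs.2.trans hθ.2⟩
  have hmono := strictMonoOn_Icc_of_critical hf hf' hm hcrit
    fun s hs => hconv s ⟨hθ.1.trans hs.1, hs.2⟩
  have hs₁θ : s₁ ≠ θ := by rintro rfl; linarith
  refine ⟨s₁, s₂, ⟨hs₁.1, hs₁.2.trans hθ.2⟩, ⟨hθ.1.trans hs₂.1, hs₂.2⟩,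
    (lt_of_lt_of_le (lt_of_le_of_ne hs₁.2 hs₁θ) hs₂.1).ne, hfs₁, hfs₂, fun s hs hfs => ?_⟩
  rcases le_total s θ with hsθ | hθs
  · exact .inl (hanti.injOn ⟨hs.1, hsθ⟩ hs₁ (hfs.trans hfs₁.symm))
  · exact .inr (hmono.injOn ⟨hθs, hs.2⟩ hs₂ (hfs.trans hfs₂.symm))

end SecondDerivative

lemma hasDerivAt_inner_iteratedDeriv {E : Type*} [NormedAddCommGroup E] [InnerProductSpace ℝ E]
    {γ : ℝ → E} {j : ℕ} (hγ : ContDiff ℝ (j + 1) γ) (ξ : E) (s : ℝ) :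
    HasDerivAt (fun t => ⟪iteratedDeriv j γ t, ξ⟫_ℝ) ⟪iteratedDeriv (j + 1) γ s, ξ⟫_ℝ s := by
  rw [iteratedDeriv_succ]
  exact ((hγ.differentiable_iteratedDeriv' j s).hasDerivAt.inner ℝ
    (hasDerivAt_const s ξ)).congr_deriv (by simp)

section Trichotomy

variable {g g' g'' : ℝ → ℝ} {K δ θ : ℝ}

lemma abs_le_of_critical (hg' : ∀ s, HasDerivAt g' (g'' s) s) (hK : 0 < K)
    (hconv : ∀ s ∈ Icc (-1 : ℝ) 1, K / 2 ≤ g'' s) (hδ : δ ∈ Icc 0 1)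
    (hθ : θ ∈ Icc (-1 : ℝ) 1) (hcrit : g' θ = 0) (hδsmall : |g' δ| ≤ 8 * δ * K) :
    |θ| ≤ 17 * δ := by
  have h := mul_abs_sub_le_abs_sub_of_le_hasDerivAt hg' hconv ⟨by linarith [hδ.1], hδ.2⟩ hθ
  rw [hcrit, zero_sub, abs_neg] at h
  have hθδ : |θ - δ| ≤ 16 * δ := by nlinarith [abs_nonneg (θ - δ)]
  linarith [abs_sub_abs_le_abs_sub θ δ, abs_of_nonneg hδ.1]

lemma neg_le_of_near_zero (hg : ∀ s, HasDerivAt g (g' s) s)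
    (hg' : ∀ s, HasDerivAt g' (g'' s) s) (hK : 0 < K)
    (hconv : ∀ s ∈ Icc (-1 : ℝ) 1, K / 2 ≤ g'' s) (hδ : 0 ≤ δ) (hδ' : δ ≤ 1 / 1000)
    (hθ : θ ∈ Icc (-1 : ℝ) 1) (hθsmall : |θ| ≤ 17 * δ) (h0 : |g 0| ≤ 8 * δ * K)
    (h0' : |g' 0| ≤ 8 * δ * K) :
    -(9 * δ * K) ≤ g θ := by
  have htaylor := tangent_add_half_mul_sq_le hg hg' hconv (x := 0) ⟨by norm_num, by norm_num⟩ hθ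
  have hlin : |g' 0 * θ| ≤ δ * K :=
    calc |g' 0 * θ| = |g' 0| * |θ| := abs_mul _ _
      _ ≤ 8 * δ * K * (17 * δ) := mul_le_mul h0' hθsmall (abs_nonneg _) (by positivity)
      _ ≤ δ * K := by nlinarith [mul_nonneg hδ hK.le]
  have hsq : 0 ≤ K / 2 / 2 * (θ - 0) ^ 2 := by positivity
  rw [sub_zero] at htaylor hsq
  linarith [abs_le.1 h0, abs_le.1 hlin]

theorem zeros_trichotomy_of_critical (hg : ∀ s, HasDerivAt g (g' s) s)
    (hg' : ∀ s, HasDerivAt g' (g'' s) s) (hK : 0 < K)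
    (hconv : ∀ s ∈ Icc (-1 : ℝ) 1, K / 2 ≤ g'' s) (hδ : 0 < δ) (hδ' : δ ≤ 1 / 1000)
    (hθ : θ ∈ Icc (-1 : ℝ) 1) (hcrit : g' θ = 0) (h0 : |g 0| ≤ 8 * δ * K)
    (h0' : |g' 0| ≤ 8 * δ * K) (hδsmall : |g' δ| ≤ 8 * δ * K) :
    (0 < g θ → ∀ s ∈ Icc (-1 : ℝ) 1, g s ≠ 0) ∧
    (g θ = 0 → ∀ s ∈ Icc (-1 : ℝ) 1, g s = 0 → s = θ) ∧
    (g θ < 0 → ∃ s₁ s₂ : ℝ, s₁ ∈ Icc (-1 : ℝ) 1 ∧ s₂ ∈ Icc (-1 : ℝ) 1 ∧ s₁ ≠ s₂ ∧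
      g s₁ = 0 ∧ g s₂ = 0 ∧ |s₁| ≤ 23 * √δ ∧ |s₂| ≤ 23 * √δ ∧
      ∀ s ∈ Icc (-1 : ℝ) 1, g s = 0 → s = s₁ ∨ s = s₂) := by
  have hθsmall := abs_le_of_critical hg' hK hconv ⟨hδ.le, by linarith⟩ hθ hcrit hδsmall
  have hmin := neg_le_of_near_zero hg hg' hK hconv hδ.le hδ' hθ hθsmall h0 h0'
  have hquad : ∀ s ∈ Icc (-1 : ℝ) 1, g θ + K / 4 * (s - θ) ^ 2 ≤ g s := fun s hs => by
    have := tangent_add_half_mul_sq_le hg hg' hconv hθ hs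
    rw [hcrit] at this
    linarith
  have hpos_far : ∀ s ∈ Icc (-1 : ℝ) 1, 36 * δ < (s - θ) ^ 2 → 0 < g s := fun s hs hfar => by
    nlinarith [hquad s hs]
  have hroot : ∀ s ∈ Icc (-1 : ℝ) 1, g s = 0 → |s| ≤ 23 * √δ := fun s hs hgs => by
    have hnear : |s - θ| ≤ 6 * √δ := by
      have : √(36 * δ) = 6 * √δ := by
        rw [Real.sqrt_mul (by norm_num), show (36 : ℝ) = 6 ^ 2 by norm_num,
          Real.sqrt_sq (by norm_num)]
      exact this ▸ Real.abs_le_sqrt (not_lt.1 fun hfar => (hpos_far s hs hfar).ne' hgs)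
    have hδsqrt : δ ≤ √δ := (Real.le_sqrt hδ.le hδ.le).2 (by nlinarith)
    linarith [abs_sub_abs_le_abs_sub s θ]
  refine ⟨fun hpos s hs => ?_, fun hzero s hs hgs => ?_, fun hneg => ?_⟩
  · have : 0 ≤ K / 4 * (s - θ) ^ 2 := by positivity
    exact (hpos.trans_le (by linarith [hquad s hs])).ne'
  · have hsq : (s - θ) ^ 2 ≤ 0 := by nlinarith [hquad s hs]
    exact sub_eq_zero.1 (pow_eq_zero_iff two_ne_zero |>.1 (le_antisymm hsq (sq_nonneg _)))
  · have hθ' := abs_le.1 hθsmall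
    obtain ⟨s₁, s₂, hs₁, hs₂, hne, hgs₁, hgs₂, honly⟩ :=
      exists_two_zeros_of_critical hg hg' (half_pos hK) hcrit hconv hθ hneg
        (hpos_far (-1) ⟨le_rfl, by norm_num⟩ (by nlinarith))
        (hpos_far 1 ⟨by norm_num, le_rfl⟩ (by nlinarith))
    exact ⟨s₁, s₂, hs₁, hs₂, hne, hgs₁, hgs₂, hroot s₁ hs₁ hgs₁, hroot s₂ hs₂ hgs₂, honly⟩

end Trichotomy

/-- trichotomy for the roots of `⟨γ''(·), ξ⟩` on `[−1,1]` according to the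
sign of `u₂(ξ) = ⟨γ''(θ₂(ξ)), ξ⟩`. -/
theorem statement12 :
    ∃ δs : ℝ, 0 < δs ∧ δs < 1 ∧ ∃ C : ℝ, 0 < C ∧
    ∀ δ₀ : ℝ, 0 < δ₀ → δ₀ ≤ δs →
    ∀ γ : ℝ → Euc 4, InG 4 δ₀ γ →
    ∀ ξ : Euc 4, ξ ≠ 0 → Admissible δ₀ γ ξ →
    ∀ θ : ℝ, θ ∈ Set.Icc (-1 : ℝ) 1 → ⟪iteratedDeriv 3 γ θ, ξ⟫_ℝ = 0 →
      ((0 < ⟪iteratedDeriv 2 γ θ, ξ⟫_ℝ →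
          ∀ s ∈ Set.Icc (-1 : ℝ) 1, ⟪iteratedDeriv 2 γ s, ξ⟫_ℝ ≠ 0) ∧
       (⟪iteratedDeriv 2 γ θ, ξ⟫_ℝ = 0 →
          ∀ s ∈ Set.Icc (-1 : ℝ) 1, ⟪iteratedDeriv 2 γ s, ξ⟫_ℝ = 0 → s = θ) ∧
       (⟪iteratedDeriv 2 γ θ, ξ⟫_ℝ < 0 →
          ∃ s₁ s₂ : ℝ, s₁ ∈ Set.Icc (-1 : ℝ) 1 ∧ s₂ ∈ Set.Icc (-1 : ℝ) 1 ∧ s₁ ≠ s₂ ∧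
            ⟪iteratedDeriv 2 γ s₁, ξ⟫_ℝ = 0 ∧ ⟪iteratedDeriv 2 γ s₂, ξ⟫_ℝ = 0 ∧
            |s₁| ≤ C * Real.sqrt δ₀ ∧ |s₂| ≤ C * Real.sqrt δ₀ ∧
            ∀ s ∈ Set.Icc (-1 : ℝ) 1, ⟪iteratedDeriv 2 γ s, ξ⟫_ℝ = 0 →
              s = s₁ ∨ s = s₂)) := by
  refine ⟨1 / 1000, by norm_num, by norm_num, 23, by norm_num, ?_⟩
  intro δ₀ hδ₀ hδs γ hγ ξ hξ hadm θ hθ hcrit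
  obtain ⟨-, hconv, hsmall⟩ := hadm
  have hsmooth : ∀ j : ℕ, ContDiff ℝ (j + 1) γ := fun j => hγ.1.of_le (by exact_mod_cast le_top)
  have hI₀ : (0 : ℝ) ∈ Icc (-δ₀) δ₀ := ⟨by linarith, hδ₀.le⟩
  refine zeros_trichotomy_of_critical (hasDerivAt_inner_iteratedDeriv (hsmooth 2) ξ)
    (hasDerivAt_inner_iteratedDeriv (hsmooth 3) ξ) (norm_pos_iff.2 hξ)
    (fun s hs => by linarith [hconv s hs]) hδ₀ hδs hθ hcrit
    (hsmall 2 (by norm_num) (by norm_num) 0 hI₀) (hsmall 3 (by norm_num) (by norm_num) 0 hI₀)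
    (hsmall 3 (by norm_num) (by norm_num) δ₀ ⟨by linarith, le_rfl⟩)
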